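/- arXiv:2503.00755 — 4 statements merged into one kernel-verified Lean document; each statement's English description precedes it below -/
import Mathlib

section
/- Let ω₁, …, ω_m be a basis of the real vector space of antisymmetric n×n real matrices, where m = n(n-1)/2. Then the family of (0,4)-tensors {T[ω_i, ω_j] : 1 ≤ i ≤ j ≤ m}, where T[ω,ω'] a b c d = ω a b * ω' c d + ω' a b * ω c d, is linearly independent and spans the subspace of Riemann-like (0,4)-tensors on ℝⁿ; i.e., it is a basis of the Riemann-like tensors. -/
open Matrix

/-- The subspace of Riemann-like (0,4)-tensors on ℝⁿ. -/
def RiemannLike (n : ℕ) : Submodule ℝ (Fin n → Fin n → Fin n → Fin n → ℝ) where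
  carrier := {T | (∀ a b c d, T a b c d = -T b a c d) ∧
                  (∀ a b c d, T a b c d = -T a b d c) ∧
                  (∀ a b c d, T a b c d = T c d a b)}
  add_mem' := by
    rintro x y ⟨hx1, hx2, hx3⟩ ⟨hy1, hy2, hy3⟩
    refine ⟨fun a b c d => ?_, fun a b c d => ?_, fun a b c d => ?_⟩ <;>
      simp only [Pi.add_apply]
    · rw [hx1 a b c d, hy1 a b c d]; ring
    · rw [hx2 a b c d, hy2 a b c d]; ring
    · rw [hx3 a b c d, hy3 a b c d]
  zero_mem' := by
    refine ⟨fun a b c d => ?_, fun a b c d => ?_, fun a b c d => ?_⟩ <;> simp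
  smul_mem' := by
    rintro r x ⟨hx1, hx2, hx3⟩
    refine ⟨fun a b c d => ?_, fun a b c d => ?_, fun a b c d => ?_⟩ <;>
      simp only [Pi.smul_apply, smul_eq_mul]
    · rw [hx1 a b c d]; ring
    · rw [hx2 a b c d]; ring
    · rw [hx3 a b c d]

/-- The subspace of antisymmetric n×n real matrices. -/
def Asym (n : ℕ) : Submodule ℝ (Matrix (Fin n) (Fin n) ℝ) where
  carrier := {α | αᵀ = -α}
  add_mem' := by
    intro x y hx hy
    simp only [Set.mem_setOf_eq] at *
    rw [Matrix.transpose_add, hx, hy, neg_add]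
  zero_mem' := by simp [Set.mem_setOf_eq]
  smul_mem' := by
    intro r x hx
    simp only [Set.mem_setOf_eq] at *
    rw [Matrix.transpose_smul, hx, smul_neg]

/-- The (0,4)-tensor `T[ω,ω']` built from two antisymmetric matrices. -/
def Tbasis {n : ℕ} (ω ω' : Matrix (Fin n) (Fin n) ℝ) (a b c d : Fin n) : ℝ :=
  ω a b * ω' c d + ω' a b * ω c d

/-! ### Auxiliary material -/

lemma mem_Asym_iff {n : ℕ} (α : Matrix (Fin n) (Fin n) ℝ) : α ∈ Asym n ↔ αᵀ = -α := Iff.rfl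

lemma Asym.apply_symm {n : ℕ} {α : Matrix (Fin n) (Fin n) ℝ} (h : α ∈ Asym n) (a b : Fin n) :
    α b a = -α a b := by
  have := congrFun (congrFun (mem_Asym_iff α |>.mp h) a) b
  simpa [Matrix.transpose_apply] using this

lemma Tbasis_comm {n : ℕ} (α β : Matrix (Fin n) (Fin n) ℝ) : Tbasis α β = Tbasis β α := by
  funext a b c d; simp only [Tbasis]; ring

lemma Tbasis_mem_RiemannLike {n : ℕ} {α β : Matrix (Fin n) (Fin n) ℝ}
    (hα : α ∈ Asym n) (hβ : β ∈ Asym n) : Tbasis α β ∈ RiemannLike n := by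
  refine ⟨fun a b c d => ?_, fun a b c d => ?_, fun a b c d => ?_⟩ <;>
    simp only [Tbasis]
  · rw [Asym.apply_symm hα b a, Asym.apply_symm hβ b a]; ring
  · rw [Asym.apply_symm hα d c, Asym.apply_symm hβ d c]; ring
  · ring

/-- `Tbasis` as a bilinear map. -/
noncomputable def TbL (n : ℕ) :
    Matrix (Fin n) (Fin n) ℝ →ₗ[ℝ] Matrix (Fin n) (Fin n) ℝ →ₗ[ℝ]
      (Fin n → Fin n → Fin n → Fin n → ℝ) :=
  LinearMap.mk₂ ℝ Tbasis
    (fun α α' β => by funext a b c d; simp [Tbasis, Matrix.add_apply]; ring)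
    (fun r α β => by funext a b c d; simp [Tbasis, Matrix.smul_apply, smul_eq_mul]; ring)
    (fun α β β' => by funext a b c d; simp [Tbasis, Matrix.add_apply]; ring)
    (fun r α β => by funext a b c d; simp [Tbasis, Matrix.smul_apply, smul_eq_mul]; ring)

/-- Elementary antisymmetric matrices. -/
def Emat (n : ℕ) (i j : Fin n) : Matrix (Fin n) (Fin n) ℝ :=
  Matrix.of fun a b => (if a = i then (1:ℝ) else 0) * (if b = j then 1 else 0)
                     - (if a = j then (1:ℝ) else 0) * (if b = i then 1 else 0)

lemma Emat_mem (n : ℕ) (i j : Fin n) : Emat n i j ∈ Asym n := by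
  show (Emat n i j)ᵀ = -(Emat n i j)
  ext a b
  simp only [Matrix.transpose_apply, Matrix.neg_apply, Emat, Matrix.of_apply]
  split_ifs <;> ring

lemma sumE (n : ℕ) (f : Fin n → Fin n → ℝ) (a b : Fin n) :
    ∑ i, ∑ j, f i j * Emat n i j a b = f a b - f b a := by
  simp [Emat, mul_sub, Finset.sum_sub_distrib, mul_ite, ite_mul, Finset.sum_ite_eq,
    Finset.sum_ite_eq']

lemma decomp {n : ℕ} (T : Fin n → Fin n → Fin n → Fin n → ℝ)
    (hT1 : ∀ a b c d, T a b c d = -T b a c d)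
    (hT2 : ∀ a b c d, T a b c d = -T a b d c)
    (hT3 : ∀ a b c d, T a b c d = T c d a b) :
    T = ∑ i, ∑ j, ∑ k, ∑ l, (T i j k l / 8) • Tbasis (Emat n i j) (Emat n k l) := by
  funext a b c d
  simp only [Finset.sum_apply, Pi.smul_apply, smul_eq_mul]
  have h1 : ∀ i j : Fin n, ∑ k, ∑ l, T i j k l / 8 * Tbasis (Emat n i j) (Emat n k l) a b c d
      = (Emat n i j a b * T i j c d + Emat n i j c d * T i j a b) / 4 := by
    intro i j
    have e1 := sumE n (fun k l => T i j k l) c d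
    have e2 := sumE n (fun k l => T i j k l) a b
    have key : ∀ k l : Fin n, T i j k l / 8 * Tbasis (Emat n i j) (Emat n k l) a b c d
        = (Emat n i j a b / 8) * (T i j k l * Emat n k l c d)
          + (Emat n i j c d / 8) * (T i j k l * Emat n k l a b) := by
      intro k l; simp only [Tbasis]; ring
    calc ∑ k, ∑ l, T i j k l / 8 * Tbasis (Emat n i j) (Emat n k l) a b c d
        = ∑ k, ∑ l, ((Emat n i j a b / 8) * (T i j k l * Emat n k l c d)
          + (Emat n i j c d / 8) * (T i j k l * Emat n k l a b)) := by
          exact Finset.sum_congr rfl fun k _ => Finset.sum_congr rfl fun l _ => key k l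
      _ = (Emat n i j a b / 8) * (∑ k, ∑ l, T i j k l * Emat n k l c d)
          + (Emat n i j c d / 8) * (∑ k, ∑ l, T i j k l * Emat n k l a b) := by
          simp [Finset.sum_add_distrib, Finset.mul_sum]
      _ = (Emat n i j a b * T i j c d + Emat n i j c d * T i j a b) / 4 := by
          rw [e1, e2]
          have h3 : T i j d c = -T i j c d := by rw [hT2 i j d c]
          have h4 : T i j b a = -T i j a b := by rw [hT2 i j b a]
          rw [h3, h4]; ring
  symm
  calc (∑ i, ∑ j, ∑ k, ∑ l, T i j k l / 8 * Tbasis (Emat n i j) (Emat n k l) a b c d)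
      = ∑ i, ∑ j, (Emat n i j a b * T i j c d + Emat n i j c d * T i j a b) / 4 := by
        exact Finset.sum_congr rfl fun i _ => Finset.sum_congr rfl fun j _ => h1 i j
    _ = ((∑ i, ∑ j, T i j c d * Emat n i j a b) + (∑ i, ∑ j, T i j a b * Emat n i j c d)) / 4 := by
        conv_rhs => rw [← Finset.sum_add_distrib]
        rw [Finset.sum_div]
        refine Finset.sum_congr rfl fun i _ => ?_
        conv_rhs => rw [← Finset.sum_add_distrib]
        rw [Finset.sum_div]
        exact Finset.sum_congr rfl fun j _ => by ring
    _ = T a b c d := by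
        rw [sumE n (fun i j => T i j c d) a b, sumE n (fun i j => T i j a b) c d]
        linarith [hT1 b a c d, hT3 a b c d, hT1 d c a b]

/-- Projection of a matrix onto its antisymmetric part. -/
noncomputable def asymProj (n : ℕ) : Matrix (Fin n) (Fin n) ℝ →ₗ[ℝ] Asym n where
  toFun α := ⟨(2:ℝ)⁻¹ • (α - αᵀ), by
    rw [mem_Asym_iff, Matrix.transpose_smul, Matrix.transpose_sub, Matrix.transpose_transpose,
      ← smul_neg, neg_sub]⟩
  map_add' α β := by
    apply Subtype.ext
    simp only [Matrix.transpose_add, Submodule.coe_add]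
    rw [show α + β - (αᵀ + βᵀ) = (α - αᵀ) + (β - βᵀ) by abel, smul_add]
  map_smul' r α := by
    apply Subtype.ext
    simp only [Matrix.transpose_smul, RingHom.id_apply, SetLike.val_smul]
    rw [← smul_sub, smul_comm]

lemma asymProj_of_mem {n : ℕ} {α : Matrix (Fin n) (Fin n) ℝ} (h : α ∈ Asym n) :
    asymProj n α = ⟨α, h⟩ := by
  apply Subtype.ext
  show (2:ℝ)⁻¹ • (α - αᵀ) = α
  rw [(mem_Asym_iff α).mp h, sub_neg_eq_add]
  rw [show α + α = (2:ℝ) • α by rw [two_smul], smul_smul]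
  norm_num

/-- If ω₁, …, ω_m is a basis of the antisymmetric n×n matrices (m = n(n-1)/2), then the
family `{T[ω_i, ω_j] : i ≤ j}` is linearly independent and spans the Riemann-like tensors,
i.e. it is a basis of the space of Riemann-like (0,4)-tensors on ℝⁿ. -/
theorem tbasis_family_is_basis (n m : ℕ) (hm : m = n * (n - 1) / 2)
    (ω : Module.Basis (Fin m) ℝ (Asym n)) :
    LinearIndependent ℝ (fun p : {p : Fin m × Fin m // p.1 ≤ p.2} =>
      Tbasis (ω p.1.1 : Matrix (Fin n) (Fin n) ℝ) (ω p.1.2 : Matrix (Fin n) (Fin n) ℝ)) ∧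
    Submodule.span ℝ (Set.range (fun p : {p : Fin m × Fin m // p.1 ≤ p.2} =>
      Tbasis (ω p.1.1 : Matrix (Fin n) (Fin n) ℝ) (ω p.1.2 : Matrix (Fin n) (Fin n) ℝ))) =
      RiemannLike n := by
  classical
  constructor
  · -- Linear independence
    rw [Fintype.linearIndependent_iff]
    intro g hg q
    -- dual functionals on the matrix space
    set f : Fin m → Matrix (Fin n) (Fin n) ℝ →ₗ[ℝ] ℝ :=
      fun k => (ω.coord k) ∘ₗ asymProj n with hfdef
    have hf : ∀ (k i : Fin m), f k (ω i : Matrix (Fin n) (Fin n) ℝ)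
        = if i = k then (1:ℝ) else 0 := by
      intro k i
      have : asymProj n (ω i : Matrix (Fin n) (Fin n) ℝ) = ω i := by
        rw [asymProj_of_mem (ω i).2]
      simp only [hfdef, LinearMap.comp_apply, this, Module.Basis.coord_apply, Module.Basis.repr_self_apply]
    have hrel : ∀ a b c d : Fin n, ∑ p : {p : Fin m × Fin m // p.1 ≤ p.2}, g p *
        ((ω p.1.1 : Matrix (Fin n) (Fin n) ℝ) a b * (ω p.1.2 : Matrix (Fin n) (Fin n) ℝ) c d
          + (ω p.1.2 : Matrix (Fin n) (Fin n) ℝ) a b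
            * (ω p.1.1 : Matrix (Fin n) (Fin n) ℝ) c d) = 0 := by
      intro a b c d
      have h0 := congrFun (congrFun (congrFun (congrFun hg a) b) c) d
      simpa [Finset.sum_apply, Pi.smul_apply, Tbasis] using h0
    have hN : ∀ c d : Fin n, ∑ p : {p : Fin m × Fin m // p.1 ≤ p.2}, g p •
        (((ω p.1.2 : Matrix (Fin n) (Fin n) ℝ) c d) • (ω p.1.1 : Matrix (Fin n) (Fin n) ℝ)
          + ((ω p.1.1 : Matrix (Fin n) (Fin n) ℝ) c d) • (ω p.1.2 : Matrix (Fin n) (Fin n) ℝ))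
        = (0 : Matrix (Fin n) (Fin n) ℝ) := by
      intro c d
      ext a b
      simp only [Matrix.sum_apply, Matrix.add_apply, Matrix.smul_apply, smul_eq_mul,
        Matrix.zero_apply]
      rw [← hrel a b c d]
      exact Finset.sum_congr rfl fun p _ => by ring
    have h2 : ∀ (k : Fin m) (c d : Fin n), ∑ p : {p : Fin m × Fin m // p.1 ≤ p.2}, g p *
        ((ω p.1.2 : Matrix (Fin n) (Fin n) ℝ) c d * (if p.1.1 = k then (1:ℝ) else 0)
          + (ω p.1.1 : Matrix (Fin n) (Fin n) ℝ) c d * (if p.1.2 = k then (1:ℝ) else 0)) = 0 := by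
      intro k c d
      have h0 := congrArg (f k) (hN c d)
      rw [map_sum, map_zero] at h0
      calc ∑ p : {p : Fin m × Fin m // p.1 ≤ p.2}, g p *
          ((ω p.1.2 : Matrix (Fin n) (Fin n) ℝ) c d * (if p.1.1 = k then (1:ℝ) else 0)
            + (ω p.1.1 : Matrix (Fin n) (Fin n) ℝ) c d * (if p.1.2 = k then (1:ℝ) else 0))
          = ∑ p : {p : Fin m × Fin m // p.1 ≤ p.2}, f k (g p •
            (((ω p.1.2 : Matrix (Fin n) (Fin n) ℝ) c d) • (ω p.1.1 : Matrix (Fin n) (Fin n) ℝ)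
              + ((ω p.1.1 : Matrix (Fin n) (Fin n) ℝ) c d)
                • (ω p.1.2 : Matrix (Fin n) (Fin n) ℝ))) := by
            refine Finset.sum_congr rfl fun p _ => ?_
            rw [_root_.map_smul, map_add, _root_.map_smul, _root_.map_smul,
              hf k p.1.1, hf k p.1.2]
            simp [smul_eq_mul]
        _ = 0 := h0
    have hN' : ∀ k : Fin m, ∑ p : {p : Fin m × Fin m // p.1 ≤ p.2}, g p •
        ((if p.1.1 = k then (1:ℝ) else 0) • (ω p.1.2 : Matrix (Fin n) (Fin n) ℝ)
          + (if p.1.2 = k then (1:ℝ) else 0) • (ω p.1.1 : Matrix (Fin n) (Fin n) ℝ))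
        = (0 : Matrix (Fin n) (Fin n) ℝ) := by
      intro k
      ext c d
      simp only [Matrix.sum_apply, Matrix.add_apply, Matrix.smul_apply, smul_eq_mul,
        Matrix.zero_apply]
      refine Eq.trans (Finset.sum_congr rfl fun p _ => ?_) (h2 k c d)
      ring
    have h3 : ∀ k l : Fin m, ∑ p : {p : Fin m × Fin m // p.1 ≤ p.2}, g p *
        ((if p.1.1 = k then (1:ℝ) else 0) * (if p.1.2 = l then (1:ℝ) else 0)
          + (if p.1.2 = k then (1:ℝ) else 0) * (if p.1.1 = l then (1:ℝ) else 0)) = 0 := by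
      intro k l
      have h0 := congrArg (f l) (hN' k)
      rw [map_sum, map_zero] at h0
      calc ∑ p : {p : Fin m × Fin m // p.1 ≤ p.2}, g p *
          ((if p.1.1 = k then (1:ℝ) else 0) * (if p.1.2 = l then (1:ℝ) else 0)
            + (if p.1.2 = k then (1:ℝ) else 0) * (if p.1.1 = l then (1:ℝ) else 0))
          = ∑ p : {p : Fin m × Fin m // p.1 ≤ p.2}, f l (g p •
            ((if p.1.1 = k then (1:ℝ) else 0) • (ω p.1.2 : Matrix (Fin n) (Fin n) ℝ)
              + (if p.1.2 = k then (1:ℝ) else 0)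
                • (ω p.1.1 : Matrix (Fin n) (Fin n) ℝ))) := by
            refine Finset.sum_congr rfl fun p _ => ?_
            rw [_root_.map_smul, map_add, _root_.map_smul, _root_.map_smul,
              hf l p.1.2, hf l p.1.1]
            simp [smul_eq_mul]
        _ = 0 := h0
    have hside : ∀ p : {p : Fin m × Fin m // p.1 ≤ p.2}, p ≠ q → g p *
        ((if p.1.1 = q.1.1 then (1:ℝ) else 0) * (if p.1.2 = q.1.2 then (1:ℝ) else 0)
          + (if p.1.2 = q.1.1 then (1:ℝ) else 0) * (if p.1.1 = q.1.2 then (1:ℝ) else 0))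
        = 0 := by
      intro p hpq
      by_cases hA : p.1.1 = q.1.1 ∧ p.1.2 = q.1.2
      · exact absurd (Subtype.ext (Prod.ext hA.1 hA.2)) hpq
      by_cases hB : p.1.2 = q.1.1 ∧ p.1.1 = q.1.2
      · have he : q.1.1 = q.1.2 := le_antisymm q.2 (by rw [← hB.2, ← hB.1]; exact p.2)
        exact absurd (Subtype.ext (Prod.ext (hB.2.trans he.symm) (hB.1.trans he))) hpq
      · rcases not_and_or.mp hA with h | h <;> rcases not_and_or.mp hB with h' | h' <;>
          simp [h, h']
    have h4 := h3 q.1.1 q.1.2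
    rw [Fintype.sum_eq_single q hside] at h4
    by_cases he : q.1.1 = q.1.2
    · simp [he] at h4
      linarith
    · have he' : ¬ (q.1.2 = q.1.1) := fun h => he h.symm
      simp [he, he'] at h4
      exact h4
  · -- Span
    apply le_antisymm
    · rw [Submodule.span_le]
      rintro _ ⟨p, rfl⟩
      exact Tbasis_mem_RiemannLike (ω p.1.1).2 (ω p.1.2).2
    · have pair_mem : ∀ i j : Fin m,
          Tbasis (ω i : Matrix (Fin n) (Fin n) ℝ) (ω j : Matrix (Fin n) (Fin n) ℝ) ∈
            Submodule.span ℝ (Set.range (fun p : {p : Fin m × Fin m // p.1 ≤ p.2} =>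
              Tbasis (ω p.1.1 : Matrix (Fin n) (Fin n) ℝ)
                (ω p.1.2 : Matrix (Fin n) (Fin n) ℝ))) := by
        intro i j
        rcases le_total i j with h | h
        · exact Submodule.subset_span ⟨⟨(i, j), h⟩, rfl⟩
        · rw [Tbasis_comm]
          exact Submodule.subset_span ⟨⟨(j, i), h⟩, rfl⟩
      have Tb_mem : ∀ (α β : Matrix (Fin n) (Fin n) ℝ), α ∈ Asym n → β ∈ Asym n →
          Tbasis α β ∈ Submodule.span ℝ (Set.range (fun p : {p : Fin m × Fin m // p.1 ≤ p.2} =>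
            Tbasis (ω p.1.1 : Matrix (Fin n) (Fin n) ℝ)
              (ω p.1.2 : Matrix (Fin n) (Fin n) ℝ))) := by
        intro α β hα hβ
        have hα' : (∑ i, ω.repr ⟨α, hα⟩ i • (ω i : Matrix (Fin n) (Fin n) ℝ)) = α := by
          have h0 := congrArg (Submodule.subtype (Asym n)) (ω.sum_repr ⟨α, hα⟩)
          rw [map_sum] at h0
          simpa only [_root_.map_smul, Submodule.subtype_apply] using h0
        have hβ' : (∑ j, ω.repr ⟨β, hβ⟩ j • (ω j : Matrix (Fin n) (Fin n) ℝ)) = β := by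
          have h0 := congrArg (Submodule.subtype (Asym n)) (ω.sum_repr ⟨β, hβ⟩)
          rw [map_sum] at h0
          simpa only [_root_.map_smul, Submodule.subtype_apply] using h0
        have key : Tbasis α β = ∑ i, ∑ j, (ω.repr ⟨α, hα⟩ i * ω.repr ⟨β, hβ⟩ j) •
            Tbasis (ω i : Matrix (Fin n) (Fin n) ℝ) (ω j : Matrix (Fin n) (Fin n) ℝ) := by
          calc Tbasis α β = TbL n α β := rfl
            _ = TbL n (∑ i, ω.repr ⟨α, hα⟩ i • (ω i : Matrix (Fin n) (Fin n) ℝ))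
                (∑ j, ω.repr ⟨β, hβ⟩ j • (ω j : Matrix (Fin n) (Fin n) ℝ)) := by
                rw [hα', hβ']
            _ = ∑ i, ∑ j, (ω.repr ⟨α, hα⟩ i * ω.repr ⟨β, hβ⟩ j) •
                TbL n (ω i : Matrix (Fin n) (Fin n) ℝ) (ω j : Matrix (Fin n) (Fin n) ℝ) := by
                rw [LinearMap.map_sum₂]
                refine Finset.sum_congr rfl fun i _ => ?_
                rw [LinearMap.map_smul₂, map_sum, Finset.smul_sum]

                refine Finset.sum_congr rfl fun j _ => ?_
                rw [_root_.map_smul, smul_smul]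
            _ = _ := rfl
        rw [key]
        exact Submodule.sum_mem _ fun i _ => Submodule.sum_mem _ fun j _ =>
          Submodule.smul_mem _ _ (pair_mem i j)
      intro T hT
      obtain ⟨h1, h2, h3⟩ := hT
      rw [decomp T h1 h2 h3]
      exact Submodule.sum_mem _ fun i _ => Submodule.sum_mem _ fun j _ =>
        Submodule.sum_mem _ fun k _ => Submodule.sum_mem _ fun l _ =>
        Submodule.smul_mem _ _ (Tb_mem _ _ (Emat_mem n i j) (Emat_mem n k l))
end

section
/- Let ω₁, …, ω_m be antisymmetric n×n real matrices and let c_{ij} : ℝⁿ → ℝ, for 1 ≤ i ≤ j ≤ m, be C³ functions. Define S : ℝⁿ → Matrix (Fin n) (Fin n) ℝ by S(x) a b = ∑_{1 ≤ i ≤ j ≤ m} ∑_{c,d} T[ω_i,ω_j] a c b d * ∂_c ∂_d c_{ij}(x), where T[ω,ω'] a b c d = ω a b * ω' c d + ω' a b * ω c d. Then for every x ∈ ℝⁿ, S(x) is a symmetric matrix, and S is divergence-free: ∑_a ∂_a (fun y => S(y) a b) (x) = 0 for every b and every x. -/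
open Matrix

/-- The partial derivative of `f : ℝⁿ → ℝ` in the `c`-th standard coordinate direction. -/
noncomputable def pd {n : ℕ} (c : Fin n) (f : (Fin n → ℝ) → ℝ) (x : Fin n → ℝ) : ℝ :=
  fderiv ℝ f x (Pi.single c 1)

section auxRTNN

variable {n : ℕ}

noncomputable abbrev ee (n : ℕ) (c : Fin n) : Fin n → ℝ := Pi.single c 1

theorem hasFDerivAt_apply_const {F : Type*} [NormedAddCommGroup F] [NormedSpace ℝ F]
    (A : (Fin n → ℝ) → ((Fin n → ℝ) →L[ℝ] F)) (v : Fin n → ℝ) (x : Fin n → ℝ)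
    (hA : DifferentiableAt ℝ A x) :
    HasFDerivAt (fun y => A y v)
      ((ContinuousLinearMap.apply ℝ F v).comp (fderiv ℝ A x)) x :=
  (ContinuousLinearMap.apply ℝ F v).hasFDerivAt.comp x hA.hasFDerivAt

theorem pd_pd_eq (f : (Fin n → ℝ) → ℝ) (hf : ContDiff ℝ 2 f) (c d : Fin n) (x : Fin n → ℝ) :
    pd c (pd d f) x = fderiv ℝ (fderiv ℝ f) x (ee n c) (ee n d) := by
  have h1 : ContDiff ℝ 1 (fderiv ℝ f) := hf.fderiv_right (by norm_num)
  have h2 : DifferentiableAt ℝ (fderiv ℝ f) x := (h1.differentiable one_ne_zero) x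
  have key := hasFDerivAt_apply_const (fderiv ℝ f) (ee n d) x h2
  have : pd d f = fun y => fderiv ℝ f y (ee n d) := rfl
  rw [pd, this, key.fderiv]
  rfl

theorem pd_pd_comm (f : (Fin n → ℝ) → ℝ) (hf : ContDiff ℝ 2 f) (c d : Fin n) (x : Fin n → ℝ) :
    pd c (pd d f) x = pd d (pd c f) x := by
  rw [pd_pd_eq f hf, pd_pd_eq f hf]
  exact ((hf.contDiffAt (x := x)).isSymmSndFDerivAt (by norm_num)) _ _

theorem hasFDerivAt_pd_pd (f : (Fin n → ℝ) → ℝ) (hf : ContDiff ℝ 3 f) (c d : Fin n)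
    (x : Fin n → ℝ) :
    HasFDerivAt (pd c (pd d f))
      (((ContinuousLinearMap.apply ℝ ℝ (ee n d)).comp
          (ContinuousLinearMap.apply ℝ ((Fin n → ℝ) →L[ℝ] ℝ) (ee n c))).comp
        (fderiv ℝ (fderiv ℝ (fderiv ℝ f)) x)) x := by
  have h2 : ContDiff ℝ 1 (fderiv ℝ (fderiv ℝ f)) :=
    (hf.fderiv_right (m := 2) (by norm_num)).fderiv_right (by norm_num)
  have hd := (h2.differentiable one_ne_zero) x
  have : pd c (pd d f) = fun y =>
      ((ContinuousLinearMap.apply ℝ ℝ (ee n d)).comp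
        (ContinuousLinearMap.apply ℝ ((Fin n → ℝ) →L[ℝ] ℝ) (ee n c))) (fderiv ℝ (fderiv ℝ f) y) := by
    funext y
    exact pd_pd_eq f (hf.of_le (by norm_num)) c d y
  rw [this]
  exact (((ContinuousLinearMap.apply ℝ ℝ (ee n d)).comp
      (ContinuousLinearMap.apply ℝ ((Fin n → ℝ) →L[ℝ] ℝ) (ee n c))).hasFDerivAt).comp x
    hd.hasFDerivAt

theorem pd_pd_pd_eq (f : (Fin n → ℝ) → ℝ) (hf : ContDiff ℝ 3 f) (a c d : Fin n)
    (x : Fin n → ℝ) :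
    pd a (pd c (pd d f)) x = fderiv ℝ (fderiv ℝ (fderiv ℝ f)) x (ee n a) (ee n c) (ee n d) := by
  rw [pd, (hasFDerivAt_pd_pd f hf c d x).fderiv]
  rfl

theorem third_symm (f : (Fin n → ℝ) → ℝ) (hf : ContDiff ℝ 3 f) (a c d : Fin n)
    (x : Fin n → ℝ) :
    pd a (pd c (pd d f)) x = pd c (pd a (pd d f)) x := by
  rw [pd_pd_pd_eq f hf, pd_pd_pd_eq f hf]
  have h1 : ContDiff ℝ 2 (fderiv ℝ f) := hf.fderiv_right (by norm_num)
  have := ((h1.contDiffAt (x := x)).isSymmSndFDerivAt (by norm_num)) (ee n a) (ee n c)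
  rw [this]

theorem sum_skew {ι : Type*} [Fintype ι] (F : ι → ι → ℝ) (h : ∀ a c, F c a = -F a c) :
    ∑ a, ∑ c, F a c = 0 := by
  have h1 : ∑ a, ∑ c, F a c = ∑ a, ∑ c, F c a := Finset.sum_comm
  have h2 : ∑ a, ∑ c, F c a = -∑ a, ∑ c, F a c := by
    rw [← Finset.sum_neg_distrib]
    refine Finset.sum_congr rfl fun a _ => ?_
    rw [← Finset.sum_neg_distrib]
    exact Finset.sum_congr rfl fun c _ => h a c
  linarith

end auxRTNN

/-- Given antisymmetric matrices ω₁,…,ω_m and C³ scalar functions c_{ij} (1 ≤ i ≤ j ≤ m),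
the field `S(x) a b = ∑_{i ≤ j} ∑_{c,d} T[ω_i,ω_j] a c b d * ∂_c ∂_d c_{ij}(x)` is pointwise
a symmetric matrix and is divergence-free. -/
theorem rtnn_symmetric_divergence_free (n m : ℕ)
    (ω : Fin m → Matrix (Fin n) (Fin n) ℝ) (hω : ∀ i, (ω i)ᵀ = -(ω i))
    (co : {p : Fin m × Fin m // p.1 ≤ p.2} → (Fin n → ℝ) → ℝ)
    (hco : ∀ p, ContDiff ℝ 3 (co p))
    (S : (Fin n → ℝ) → Matrix (Fin n) (Fin n) ℝ)
    (hS : ∀ x a b, S x a b = ∑ p : {p : Fin m × Fin m // p.1 ≤ p.2},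
      ∑ c, ∑ d, Tbasis (ω p.1.1) (ω p.1.2) a c b d * pd c (pd d (co p)) x) :
    (∀ x a b, S x a b = S x b a) ∧
    (∀ (b : Fin n) (x : Fin n → ℝ), ∑ a, pd a (fun y => S y a b) x = 0) := by
  have hskew : ∀ i (a c : Fin n), ω i c a = -ω i a c := by
    intro i a c
    have := congrFun (congrFun (hω i) a) c
    simpa [Matrix.transpose_apply] using this
  constructor
  · intro x a b
    rw [hS x a b, hS x b a]
    refine Finset.sum_congr rfl fun p _ => ?_
    rw [Finset.sum_comm]
    refine Finset.sum_congr rfl fun c _ => Finset.sum_congr rfl fun d _ => ?_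
    rw [pd_pd_comm (co p) ((hco p).of_le (by norm_num)) d c x]
    simp only [Tbasis]
    ring
  · intro b x
    have e1 : ∀ a : Fin n, pd a (fun y => S y a b) x =
        ∑ p : {p : Fin m × Fin m // p.1 ≤ p.2}, ∑ c, ∑ d,
          Tbasis (ω p.1.1) (ω p.1.2) a c b d * pd a (pd c (pd d (co p))) x := by
      intro a
      have hfun : (fun y => S y a b) = fun y =>
          ∑ p : {p : Fin m × Fin m // p.1 ≤ p.2}, ∑ c, ∑ d,
            Tbasis (ω p.1.1) (ω p.1.2) a c b d * pd c (pd d (co p)) y :=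
        funext fun y => hS y a b
      have H : HasFDerivAt (fun y =>
          ∑ p : {p : Fin m × Fin m // p.1 ≤ p.2}, ∑ c, ∑ d,
            Tbasis (ω p.1.1) (ω p.1.2) a c b d * pd c (pd d (co p)) y)
          (∑ p : {p : Fin m × Fin m // p.1 ≤ p.2}, ∑ c, ∑ d,
            Tbasis (ω p.1.1) (ω p.1.2) a c b d •
              (((ContinuousLinearMap.apply ℝ ℝ (ee n d)).comp
                  (ContinuousLinearMap.apply ℝ ((Fin n → ℝ) →L[ℝ] ℝ) (ee n c))).comp
                (fderiv ℝ (fderiv ℝ (fderiv ℝ (co p))) x))) x := by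
        refine HasFDerivAt.fun_sum fun p _ => HasFDerivAt.fun_sum fun c _ => HasFDerivAt.fun_sum fun d _ => ?_
        exact (hasFDerivAt_pd_pd (co p) (hco p) c d x).const_mul _
      rw [pd, hfun, H.fderiv]
      simp only [ContinuousLinearMap.sum_apply, ContinuousLinearMap.smul_apply, smul_eq_mul]
      refine Finset.sum_congr rfl fun p _ => Finset.sum_congr rfl fun c _ =>
        Finset.sum_congr rfl fun d _ => ?_
      congr 1
      rw [pd_pd_pd_eq (co p) (hco p) a c d x]
      rfl
    simp_rw [e1]
    rw [Finset.sum_comm]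
    refine Finset.sum_eq_zero fun p _ => ?_
    refine sum_skew (fun a c => ∑ d, Tbasis (ω p.1.1) (ω p.1.2) a c b d *
      pd a (pd c (pd d (co p))) x) fun a c => ?_
    rw [← Finset.sum_neg_distrib]
    refine Finset.sum_congr rfl fun d _ => ?_
    rw [third_symm (co p) (hco p) a c d x]
    simp only [Tbasis, hskew p.1.1 a c, hskew p.1.2 a c]
    ring
end

section
/- Let L : ℝⁿ → Matrix (Fin n) (Fin n) ℝ be a C² matrix field such that L(x) is symmetric for every x and L is row-wise divergence-free: ∑_a ∂_a (fun y => L(y) a b) (x) = 0 for all b and all x. Define the (0,4)-tensor field K by K(x) a c b d = δ_{ab} L(x) d c − δ_{ad} L(x) b c − δ_{cb} L(x) d a + δ_{cd} L(x) b a. Then for all indices a, b and all x ∈ ℝⁿ, ∑_{c,d} ∂_c ∂_d (fun y => K(y) a c b d) (x) = Δ L_{ab}(x), where Δ L_{ab}(x) = ∑_c ∂_c ∂_c (fun y => L(y) a b) (x) is the componentwise Laplacian of L. -/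
/-- The Kronecker delta on `Fin n`, valued in ℝ. -/
def kdelta {n : ℕ} (a b : Fin n) : ℝ := if a = b then 1 else 0

section lemmas
variable {n : ℕ}

lemma contDiff_pd {f : (Fin n → ℝ) → ℝ} (c : Fin n) (hf : ContDiff ℝ 2 f) :
    ContDiff ℝ 1 (pd c f) := by
  have h : ContDiff ℝ 1 (fderiv ℝ f) := hf.fderiv_right (by norm_num)
  exact h.clm_apply contDiff_const

lemma pd_eq_snd {f : (Fin n → ℝ) → ℝ} (hf : ContDiff ℝ 2 f) (c d : Fin n) (x : Fin n → ℝ) :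
    pd c (pd d f) x = fderiv ℝ (fderiv ℝ f) x (Pi.single c 1) (Pi.single d 1) := by
  have h : ContDiff ℝ 1 (fderiv ℝ f) := hf.fderiv_right (by norm_num)
  have : pd c (pd d f) x
      = fderiv ℝ (fun y => (fderiv ℝ f y) ((fun _ : Fin n → ℝ => (Pi.single d 1 : Fin n → ℝ)) y)) x (Pi.single c 1) := rfl
  rw [this, fderiv_clm_apply (h.differentiable (by norm_num) x) (differentiableAt_const _)]
  simp

lemma pd_swap {f : (Fin n → ℝ) → ℝ} (hf : ContDiff ℝ 2 f) (c d : Fin n) (x : Fin n → ℝ) :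
    pd c (pd d f) x = pd d (pd c f) x := by
  rw [pd_eq_snd hf, pd_eq_snd hf]
  exact (hf.contDiffAt.isSymmSndFDerivAt (by norm_num)).eq _ _

lemma pd_congr {f g : (Fin n → ℝ) → ℝ} (h : ∀ y, f y = g y) (c : Fin n) :
    pd c f = pd c g := by
  have : f = g := funext h
  rw [this]

lemma pd_const (c : Fin n) (r : ℝ) (x : Fin n → ℝ) : pd c (fun _ => r) x = 0 := by
  simp [pd]

lemma pd_sum {ι : Type*} (s : Finset ι) (f : ι → (Fin n → ℝ) → ℝ)
    (hf : ∀ i, Differentiable ℝ (f i)) (c : Fin n) (x : Fin n → ℝ) :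
    ∑ i ∈ s, pd c (f i) x = pd c (fun y => ∑ i ∈ s, f i y) x := by
  unfold pd
  rw [fderiv_fun_sum (fun i _ => (hf i).differentiableAt)]
  simp

lemma pd_comb (c : Fin n) (r s t u : ℝ) (f g h k : (Fin n → ℝ) → ℝ)
    (hf : Differentiable ℝ f) (hg : Differentiable ℝ g)
    (hh : Differentiable ℝ h) (hk : Differentiable ℝ k) (x : Fin n → ℝ) :
    pd c (fun y => r * f y - s * g y - t * h y + u * k y) x
      = r * pd c f x - s * pd c g x - t * pd c h x + u * pd c k x := by
  unfold pd
  rw [fderiv_fun_add (by fun_prop) (by fun_prop), fderiv_fun_sub (by fun_prop) (by fun_prop),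
    fderiv_fun_sub (by fun_prop) (by fun_prop), fderiv_const_mul (hf x) r,
    fderiv_const_mul (hg x) s, fderiv_const_mul (hh x) t, fderiv_const_mul (hk x) u]
  simp

end lemmas

/-- For a C², pointwise symmetric, row-wise divergence-free matrix field L, the tensor field
`K(x) a c b d = δ_{ab} L(x) d c − δ_{ad} L(x) b c − δ_{cb} L(x) d a + δ_{cd} L(x) b a`
satisfies `∑_{c,d} ∂_c ∂_d K(·) a c b d = Δ L_{ab}`, the componentwise Laplacian of L. -/
theorem delta_L_field_contraction (n : ℕ)
    (L : (Fin n → ℝ) → Matrix (Fin n) (Fin n) ℝ)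
    (hL : ∀ a b, ContDiff ℝ 2 (fun y => L y a b))
    (hsym : ∀ x a b, L x a b = L x b a)
    (hdiv : ∀ (b : Fin n) (x : Fin n → ℝ), ∑ a, pd a (fun y => L y a b) x = 0)
    (K : (Fin n → ℝ) → Fin n → Fin n → Fin n → Fin n → ℝ)
    (hK : ∀ x a c b d, K x a c b d =
      kdelta a b * L x d c - kdelta a d * L x b c - kdelta c b * L x d a
        + kdelta c d * L x b a) :
    ∀ (a b : Fin n) (x : Fin n → ℝ),
      ∑ c, ∑ d, pd c (pd d (fun y => K y a c b d)) x
        = ∑ c, pd c (pd c (fun y => L y a b)) x := by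
  intro a b x
  have hLd : ∀ a b, Differentiable ℝ (fun y => L y a b) :=
    fun a b => (hL a b).differentiable (by norm_num)
  have hpdD : ∀ (d a b : Fin n), Differentiable ℝ (pd d (fun y => L y a b)) :=
    fun d a b => (contDiff_pd d (hL a b)).differentiable (by norm_num)
  have step1 : ∀ c d, pd c (pd d (fun y => K y a c b d)) x
      = kdelta a b * pd c (pd d (fun y => L y d c)) x
        - kdelta a d * pd c (pd d (fun y => L y b c)) x
        - kdelta c b * pd c (pd d (fun y => L y d a)) x
        + kdelta c d * pd c (pd d (fun y => L y b a)) x := by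
    intro c d
    have e1 : pd d (fun y => K y a c b d) = fun z =>
        kdelta a b * pd d (fun y => L y d c) z - kdelta a d * pd d (fun y => L y b c) z
          - kdelta c b * pd d (fun y => L y d a) z + kdelta c d * pd d (fun y => L y b a) z := by
      funext z
      rw [pd_congr (fun y => hK y a c b d) d]
      exact pd_comb d _ _ _ _ _ _ _ _ (hLd d c) (hLd b c) (hLd d a) (hLd b a) z
    rw [e1]
    exact pd_comb c _ _ _ _ _ _ _ _ (hpdD d d c) (hpdD d b c) (hpdD d d a) (hpdD d b a) x
  have hT1 : ∑ c, ∑ d, kdelta a b * pd c (pd d (fun y => L y d c)) x = 0 := by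
    apply Finset.sum_eq_zero; intro c _
    rw [← Finset.mul_sum,
      pd_sum Finset.univ (fun d => pd d (fun y => L y d c)) (fun d => hpdD d d c) c x,
      pd_congr (fun y => hdiv c y) c, pd_const]
    ring
  have hT2 : ∑ c, ∑ d, kdelta a d * pd c (pd d (fun y => L y b c)) x = 0 := by
    have h1 : ∀ c, ∑ d, kdelta a d * pd c (pd d (fun y => L y b c)) x
        = pd c (pd a (fun y => L y b c)) x := by
      intro c; simp [kdelta]
    simp only [h1]
    have hsw : ∀ c, pd c (pd a (fun y => L y b c)) x = pd a (pd c (fun y => L y b c)) x :=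
      fun c => pd_swap (hL b c) c a x
    rw [Finset.sum_congr rfl (fun c _ => hsw c),
      pd_sum Finset.univ (fun c => pd c (fun y => L y b c)) (fun c => hpdD c b c) a x]
    have hz : ∀ y, ∑ c, pd c (fun y' => L y' b c) y = (fun _ : Fin n → ℝ => (0:ℝ)) y := by
      intro y
      have he : ∀ c : Fin n, (fun y' => L y' b c) = (fun y' => L y' c b) :=
        fun c => funext fun y' => hsym y' b c
      simp only [he]
      exact hdiv b y
    rw [pd_congr hz a, pd_const]
  have hT3 : ∑ c, ∑ d, kdelta c b * pd c (pd d (fun y => L y d a)) x = 0 := by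
    have h1 : ∀ c, ∑ d, kdelta c b * pd c (pd d (fun y => L y d a)) x
        = kdelta c b * ∑ d, pd c (pd d (fun y => L y d a)) x := by
      intro c; rw [Finset.mul_sum]
    simp only [h1]
    have h2 : ∑ c, kdelta c b * (∑ d, pd c (pd d (fun y => L y d a)) x)
        = ∑ d, pd b (pd d (fun y => L y d a)) x := by
      simp [kdelta]
    rw [h2, pd_sum Finset.univ (fun d => pd d (fun y => L y d a)) (fun d => hpdD d d a) b x,
      pd_congr (fun y => hdiv a y) b, pd_const]
  have hT4 : ∑ c, ∑ d, kdelta c d * pd c (pd d (fun y => L y b a)) x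
      = ∑ c, pd c (pd c (fun y => L y a b)) x := by
    have h1 : ∀ c : Fin n, ∑ d, kdelta c d * pd c (pd d (fun y => L y b a)) x
        = pd c (pd c (fun y => L y b a)) x := by
      intro c; simp [kdelta]
    simp only [h1]
    have : (fun y => L y b a) = (fun y => L y a b) := funext fun y => hsym y b a
    rw [this]
  simp only [step1, Finset.sum_add_distrib, Finset.sum_sub_distrib]
  rw [hT1, hT2, hT3, hT4]
  ring
end

section
/- Work on ℝ^{1+n} with indices 0, 1, …, n, and for each pair p < q let ω_{(p,q)} be the antisymmetric (n+1)×(n+1) matrix with entries (ω_{(p,q)}) a b = δ_{pa} δ_{qb} − δ_{pb} δ_{qa} (the standard basis of antisymmetric matrices). Let c : Pairs × Pairs → (ℝ^{1+n} → ℝ) assign a C² scalar function c_{PQ} to each pair of index pairs P ≤ Q, and define S(x) a b = ∑_{P ≤ Q} ∑_{c,d} T[ω_P, ω_Q] a c b d · ∂_c ∂_d c_{PQ}(x). If c_{PQ} = 0 whenever both index pairs P and Q contain the index 0, then S(x) 0 0 = 0 for every x ∈ ℝ^{1+n}. -/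
/-- Index pairs (p,q) with p < q, indexing the standard basis of antisymmetric matrices. -/
abbrev IdxPair (n : ℕ) := {P : Fin (n + 1) × Fin (n + 1) // P.1 < P.2}

/-- Lexicographic enumeration order on index pairs. -/
abbrev pairLE {n : ℕ} (P Q : IdxPair n) : Prop :=
  P.1.1 < Q.1.1 ∨ (P.1.1 = Q.1.1 ∧ P.1.2 ≤ Q.1.2)

/-- The standard basis antisymmetric matrix `(ω_{(p,q)}) a b = δ_{pa} δ_{qb} − δ_{pb} δ_{qa}`. -/
def omegaStd {n : ℕ} (P : IdxPair n) : Matrix (Fin (n + 1)) (Fin (n + 1)) ℝ :=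
  Matrix.of fun a b => kdelta P.1.1 a * kdelta P.1.2 b - kdelta P.1.1 b * kdelta P.1.2 a

lemma omegaStd_zero_eq_zero {n : ℕ} (P : IdxPair n) (h : P.1.1 ≠ 0) (c : Fin (n + 1)) :
    omegaStd P 0 c = 0 := by
  have h2 : P.1.2 ≠ 0 := (P.1.1.zero_le.trans_lt P.2).ne'
  simp [omegaStd, kdelta, h, h2]

lemma pd_zero {n : ℕ} (c : Fin n) : pd c (0 : (Fin n → ℝ) → ℝ) = 0 := by
  funext x
  simp [pd]

/-- If the scalar coefficients `c_{PQ}` vanish whenever both index pairs P and Q contain the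
index 0, then the (0,0)-component of the RTNN output
`S(x) a b = ∑_{P ≤ Q} ∑_{c,d} T[ω_P,ω_Q] a c b d ∂_c ∂_d c_{PQ}(x)` vanishes identically
(exact incompressibility). -/
theorem rtnn_exact_incompressibility (n : ℕ)
    (co : IdxPair n × IdxPair n → (Fin (n + 1) → ℝ) → ℝ)
    (hco : ∀ pq, ContDiff ℝ 2 (co pq))
    (hzero : ∀ pq : IdxPair n × IdxPair n,
      pq.1.1.1 = 0 → pq.2.1.1 = 0 → co pq = 0)
    (S : (Fin (n + 1) → ℝ) → Matrix (Fin (n + 1)) (Fin (n + 1)) ℝ)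
    (hS : ∀ x a b, S x a b =
      ∑ pp : {pq : IdxPair n × IdxPair n // pairLE pq.1 pq.2},
        ∑ c, ∑ d, Tbasis (omegaStd pp.1.1) (omegaStd pp.1.2) a c b d
          * pd c (pd d (co pp.1)) x) :
    ∀ x, S x 0 0 = 0 := by
  intro x
  rw [hS]
  apply Finset.sum_eq_zero
  intro pp _
  by_cases h1 : pp.1.1.1.1 = 0
  · by_cases h2 : pp.1.2.1.1 = 0
    · -- both contain 0: coefficient function vanishes
      have hc : co pp.1 = 0 := hzero pp.1 h1 h2
      apply Finset.sum_eq_zero; intro c _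
      apply Finset.sum_eq_zero; intro d _
      rw [hc, pd_zero, pd_zero]
      simp
    · -- Q doesn't contain 0
      apply Finset.sum_eq_zero; intro c _
      apply Finset.sum_eq_zero; intro d _
      rw [Tbasis, omegaStd_zero_eq_zero pp.1.2 h2 c, omegaStd_zero_eq_zero pp.1.2 h2 d]
      ring
  · -- P doesn't contain 0
    apply Finset.sum_eq_zero; intro c _
    apply Finset.sum_eq_zero; intro d _
    rw [Tbasis, omegaStd_zero_eq_zero pp.1.1 h1 c, omegaStd_zero_eq_zero pp.1.1 h1 d]
    ring
end
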